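/- arXiv:1802.05690 — 3 statements merged into one kernel-verified Lean document; each statement's English description precedes it below -/
import Mathlib

section
/- Single-bit μ-biased Fourier sampling correctness: applying the single-qubit μ-biased QFT H_μ to the state Σ_{b∈{-1,1}} √(D_μ(b)) f(b) |b⟩ yields the state Σ_{v∈{0,1}} \hat{f}_μ(v) |v⟩; consequently measurement returns v with probability \hat{f}_μ(v)². -/
open Finset

/-- Embed a Boolean bit as an element of `{-1, 1} ⊆ ℝ` (`true ↦ 1`, `false ↦ -1`). -/
def bval (b : Bool) : ℝ := if b then 1 else -1

/-- The product distribution `D_μ` on `{-1,1}ⁿ`: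
`D_μ(x) = ∏_{i : x_i = 1} (1+μ_i)/2 · ∏_{i : x_i = -1} (1-μ_i)/2`. -/
noncomputable def Dmu {n : ℕ} (μ : Fin n → ℝ) (x : Fin n → Bool) : ℝ :=
  ∏ i, (1 + μ i * bval (x i)) / 2

/-- The μ-biased basis function `φ_{μ,a}(x) = ∏_{i : a_i = 1} (x_i - μ_i)/√(1-μ_i²)`. -/
noncomputable def phimu {n : ℕ} (μ : Fin n → ℝ) (a : Fin n → Bool) (x : Fin n → Bool) : ℝ :=
  ∏ i, if a i then (bval (x i) - μ i) / Real.sqrt (1 - μ i ^ 2) else 1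

/-- The μ-biased Fourier coefficient `f̂_μ(a) = E_{x∼D_μ}[f(x) φ_{μ,a}(x)]`. -/
noncomputable def fhat {n : ℕ} (μ : Fin n → ℝ) (f : (Fin n → Bool) → ℝ)
    (a : Fin n → Bool) : ℝ :=
  ∑ x : Fin n → Bool, Dmu μ x * f x * phimu μ a x

/-- Single-bit distribution: `D_μ(1) = (1+μ)/2`, `D_μ(-1) = (1-μ)/2`. -/
noncomputable def D1 (μ : ℝ) (b : Bool) : ℝ := (1 + μ * bval b) / 2

/-- Single-bit μ-biased basis: `φ_{μ,0}(b) = 1`, `φ_{μ,1}(b) = (b-μ)/√(1-μ²)`. -/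
noncomputable def phi1 (μ : ℝ) (v : Bool) (b : Bool) : ℝ :=
  if v then (bval b - μ) / Real.sqrt (1 - μ ^ 2) else 1

/-- The single-qubit μ-biased QFT, as a matrix: entry at `(v,b)` is `√(D_μ(b)) φ_{μ,v}(b)`. -/
noncomputable def H1 (μ : ℝ) : Matrix Bool Bool ℝ :=
  fun v b => Real.sqrt (D1 μ b) * phi1 μ v b

/-- Single-bit μ-biased Fourier sampling: applying `H_μ` to the state
`Σ_b √(D_μ(b)) f(b) |b⟩` yields `Σ_v f̂_μ(v) |v⟩`, where
`f̂_μ(v) = Σ_b D_μ(b) f(b) φ_{μ,v}(b)`; hence measurement returns `v` with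
probability `f̂_μ(v)²`. -/
theorem single_bit_mu_biased_fourier_sampling (μ : ℝ) (hμ : |μ| < 1)
    (f : Bool → ℝ) (hf : ∀ b, f b = 1 ∨ f b = -1) :
    (H1 μ).mulVec (fun b => Real.sqrt (D1 μ b) * f b) =
      (fun v => ∑ b : Bool, D1 μ b * f b * phi1 μ v b) ∧
    ∀ v : Bool,
      ((H1 μ).mulVec (fun b => Real.sqrt (D1 μ b) * f b) v) ^ 2 =
        (∑ b : Bool, D1 μ b * f b * phi1 μ v b) ^ 2 := by
  have hD : ∀ b, 0 ≤ D1 μ b := by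
    intro b
    have := abs_lt.mp hμ
    cases b <;> simp [D1, bval] <;> nlinarith [this.1, this.2]
  have key : (H1 μ).mulVec (fun b => Real.sqrt (D1 μ b) * f b) =
      (fun v => ∑ b : Bool, D1 μ b * f b * phi1 μ v b) := by
    funext v
    have hs : ∀ b, Real.sqrt (D1 μ b) * Real.sqrt (D1 μ b) = D1 μ b :=
      fun b => Real.mul_self_sqrt (hD b)
    simp only [Matrix.mulVec, dotProduct, H1]
    apply Finset.sum_congr rfl
    intro b _
    rw [show Real.sqrt (D1 μ b) * phi1 μ v b * (Real.sqrt (D1 μ b) * f b) =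
      (Real.sqrt (D1 μ b) * Real.sqrt (D1 μ b)) * f b * phi1 μ v b by ring, hs]
  exact ⟨key, fun v => by rw [key]⟩
end

section
/- Quantum example-oracle Fourier sampling identity: Σ_{x∈{-1,1}ⁿ} Σ_{a∈{0,1}ⁿ} D_μ(x) φ_{μ,a}(x) · (1/√2) Σ_{z∈{0,1}} (-1)^{f'(x)z} |a,z⟩ = (1/√2)(Σ_a \hat{f}_μ(a) |a,1⟩ + |0…0,0⟩), where f'(x) = (1−f(x))/2; hence measuring yields (a,1) with probability \hat{f}_μ(a)²/2. -/
open Finset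

lemma dmu_phimu_sum {n : ℕ} (μ : Fin n → ℝ) (a : Fin n → Bool) :
    ∑ x : Fin n → Bool, Dmu μ x * phimu μ a x =
      if a = (fun _ => false) then 1 else 0 := by
  have key : ∀ x : Fin n → Bool, Dmu μ x * phimu μ a x =
      ∏ i, ((1 + μ i * bval (x i)) / 2 *
        (if a i then (bval (x i) - μ i) / Real.sqrt (1 - μ i ^ 2) else 1)) := by
    intro x
    rw [Dmu, phimu, ← Finset.prod_mul_distrib]
  simp only [key]
  rw [← Fintype.prod_sum
      (fun i b => ((1 + μ i * bval b) / 2 *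
        (if a i then (bval b - μ i) / Real.sqrt (1 - μ i ^ 2) else 1)))]
  have inner : ∀ i, (∑ b : Bool, ((1 + μ i * bval b) / 2 *
      (if a i then (bval b - μ i) / Real.sqrt (1 - μ i ^ 2) else 1))) =
      if a i then 0 else 1 := by
    intro i
    rw [Fintype.sum_bool]
    by_cases h : a i <;> simp [h, bval] <;> ring
  simp only [inner]
  by_cases h : a = (fun _ => false)
  · simp [h]
  · rw [if_neg h]
    obtain ⟨i, hi⟩ : ∃ i, a i = true := by
      by_contra hc
      push_neg at hc
      exact h (funext fun i => by simpa using hc i)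
    exact Finset.prod_eq_zero (Finset.mem_univ i) (by simp [hi])

/-- Quantum example-oracle Fourier sampling identity: with `f'(x) = (1-f(x))/2 ∈ {0,1}`,
the amplitude of `|a,z⟩` in
`Σ_x Σ_a D_μ(x) φ_{μ,a}(x) (1/√2) Σ_z (-1)^{f'(x)z} |a,z⟩`
equals `(1/√2) f̂_μ(a)` for `z = 1` and `(1/√2) 𝟙[a = 0…0]` for `z = 0`; hence measuring
yields `(a,1)` with probability `f̂_μ(a)²/2`. -/
theorem quantum_example_fourier_sampling {n : ℕ} (μ : Fin n → ℝ) (hμ : ∀ i, |μ i| < 1)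
    (f : (Fin n → Bool) → ℝ) (hf : ∀ x, f x = 1 ∨ f x = -1)
    (f' : (Fin n → Bool) → ℕ) (hf' : ∀ x, (f' x : ℝ) = (1 - f x) / 2) :
    ∀ (a : Fin n → Bool) (z : Bool),
      ∑ x : Fin n → Bool,
          Dmu μ x * phimu μ a x *
            ((1 / Real.sqrt 2) * (-1 : ℝ) ^ (f' x * (if z then 1 else 0))) =
        (1 / Real.sqrt 2) *
          (if z then fhat μ f a else if a = (fun _ => false) then 1 else 0) := by
  intro a z
  have hsign : ∀ x, ((-1 : ℝ) ^ (f' x)) = f x := by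
    intro x
    rcases hf x with h | h
    · have : (f' x : ℝ) = 0 := by rw [hf' x, h]; ring
      have : f' x = 0 := by exact_mod_cast this
      simp [this, h]
    · have : (f' x : ℝ) = 1 := by rw [hf' x, h]; ring
      have : f' x = 1 := by exact_mod_cast this
      simp [this, h]
  cases z
  · simp only [Bool.false_eq_true, if_false, Nat.mul_zero, pow_zero, mul_one]
    rw [← Finset.sum_mul, dmu_phimu_sum μ a, mul_comm]
  · simp only [if_true, Nat.mul_one]
    have : ∀ x : Fin n → Bool,
        Dmu μ x * phimu μ a x * ((1 / Real.sqrt 2) * (-1 : ℝ) ^ (f' x)) =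
        (1 / Real.sqrt 2) * (Dmu μ x * f x * phimu μ a x) := by
      intro x; rw [hsign x]; ring
    rw [Finset.sum_congr rfl (fun x _ => this x), ← Finset.mul_sum, fhat]
end

section
/- Entrywise perturbation bound for the single-qubit μ-biased QFT: for c ∈ (0,1], μ, μ̃ ∈ [-1+c,1-c] with |μ−μ̃| ≤ ε, every x ∈ {-1,1} and a ∈ {0,1} satisfy |√(D_μ(x))φ_{μ,a}(x) − √(D_{μ̃}(x))φ_{μ̃,a}(x)| ≤ tε where t = ((2−c)(1/√(8c) + 1/(2c)) + 1)/c². -/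
/-!
On the two-point cube the biased character folds into the other weight:
`√((1 + μx)/2) · (x - μ)/√(1 - μ²) = x √((1 - μx)/2)`, because `x - μ = x (1 - μx)` and
`1 - μ² = (1 + μx)(1 - μx)` when `x² = 1`. Both entries are therefore of the form `±√(s/2)` with
`s = 1 ± μx ≥ c`, and `|√s - √t| = |s - t| / (√s + √t) ≤ |s - t| / (2√c)` gives the Lipschitz
constant `1/√(8c)` in `μ`, which is below the stated one since `c² ≤ 2 - c`.
-/

open Real

lemma abs_sqrt_sub_sqrt_le {c s t : ℝ} (hc : 0 < c) (hs : c ≤ s) (ht : c ≤ t) :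
    |√s - √t| ≤ |s - t| / (2 * √c) := by
  have hcs : √c ≤ √s := sqrt_le_sqrt hs
  have hct : √c ≤ √t := sqrt_le_sqrt ht
  have hsum : 0 < √s + √t := by linarith [sqrt_pos.2 hc]
  have hfactor : s - t = (√s - √t) * (√s + √t) := by
    linear_combination -sq_sqrt (hc.le.trans hs) + sq_sqrt (hc.le.trans ht)
  rw [le_div_iff₀ (by positivity), hfactor, abs_mul, abs_of_pos hsum]
  gcongr
  linarith

lemma abs_sqrt_half_sub_sqrt_half_le {c s t : ℝ} (hc : 0 < c) (hs : c ≤ s) (ht : c ≤ t) :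
    |√(s / 2) - √(t / 2)| ≤ |s - t| / √(8 * c) := by
  have h8c : √(8 * c) = 2 * (2 * √(c / 2)) := by
    rw [show 8 * c = 4 ^ 2 * (c / 2) by ring, sqrt_mul (by positivity), sqrt_sq (by norm_num)]
    ring
  calc |√(s / 2) - √(t / 2)| ≤ |s / 2 - t / 2| / (2 * √(c / 2)) :=
        abs_sqrt_sub_sqrt_le (by positivity) (by linarith) (by linarith)
    _ = |s - t| / √(8 * c) := by
        rw [h8c, ← sub_div, abs_div, abs_two]; ring

lemma sqrt_mul_div_sqrt_one_sub_sq {μ x : ℝ} (hx : x ^ 2 = 1) (hp : 0 < 1 + μ * x)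
    (hm : 0 < 1 - μ * x) :
    √((1 + μ * x) / 2) * ((x - μ) / √(1 - μ ^ 2)) = x * √((1 - μ * x) / 2) := by
  have hsplit : √(1 - μ ^ 2) = √(1 + μ * x) * √(1 - μ * x) := by
    rw [← sqrt_mul hp.le]; congr 1; linear_combination μ ^ 2 * hx
  have hnum : x - μ = x * √(1 - μ * x) ^ 2 := by
    rw [sq_sqrt hm.le]; linear_combination μ * hx
  have hp' : √(1 + μ * x) ≠ 0 := (sqrt_pos.2 hp).ne'
  have hm' : √(1 - μ * x) ≠ 0 := (sqrt_pos.2 hm).ne'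
  rw [sqrt_div hp.le, sqrt_div hm.le, hsplit, hnum]
  field_simp

lemma le_one_add_mul_of_abs_le {c μ x : ℝ} (hμ : |μ| ≤ 1 - c) (hx : |x| = 1) :
    c ≤ 1 + μ * x := by
  have := neg_abs_le (μ * x)
  rw [abs_mul, hx, mul_one] at this
  linarith

lemma inv_sqrt_le_perturbation_constant {c : ℝ} (hc : 0 < c) (hc1 : c ≤ 1) :
    1 / √(8 * c) ≤ ((2 - c) * (1 / √(8 * c) + 1 / (2 * c)) + 1) / c ^ 2 := by
  have hS : 0 < 1 / √(8 * c) := by positivity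
  have hlead : 1 ≤ (2 - c) / c ^ 2 := by
    rw [le_div_iff₀ (by positivity)]; nlinarith
  have hrest : 0 ≤ ((2 - c) * (1 / (2 * c)) + 1) / c ^ 2 := by
    have : 0 ≤ 2 - c := by linarith
    positivity
  calc 1 / √(8 * c) ≤ (2 - c) / c ^ 2 * (1 / √(8 * c)) := le_mul_of_one_le_left hS.le hlead
    _ ≤ (2 - c) / c ^ 2 * (1 / √(8 * c)) + ((2 - c) * (1 / (2 * c)) + 1) / c ^ 2 :=
        le_add_of_nonneg_right hrest
    _ = _ := by ring

lemma abs_sqrt_entry_sub_le {c μ μt ε y : ℝ} (hc : 0 < c) (hμ : |μ| ≤ 1 - c)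
    (hμt : |μt| ≤ 1 - c) (hε : |μ - μt| ≤ ε) (hy : |y| = 1) :
    |√((1 + μ * y) / 2) - √((1 + μt * y) / 2)| ≤ ε / √(8 * c) := by
  calc |√((1 + μ * y) / 2) - √((1 + μt * y) / 2)|
      ≤ |(1 + μ * y) - (1 + μt * y)| / √(8 * c) :=
        abs_sqrt_half_sub_sqrt_half_le hc (le_one_add_mul_of_abs_le hμ hy)
          (le_one_add_mul_of_abs_le hμt hy)
    _ ≤ ε / √(8 * c) := by
        rw [show (1 + μ * y) - (1 + μt * y) = (μ - μt) * y by ring, abs_mul, hy, mul_one]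
        gcongr

/-- Entrywise perturbation bound for the single-qubit μ-biased QFT: for
`c ∈ (0,1]`, `μ, μ̃ ∈ [-1+c, 1-c]` with `|μ − μ̃| ≤ ε`, every `x ∈ {-1,1}` and
`a ∈ {0,1}` satisfy `|√(D_μ(x))φ_{μ,a}(x) − √(D_μ̃(x))φ_{μ̃,a}(x)| ≤ tε`, where
`t = ((2−c)(1/√(8c) + 1/(2c)) + 1)/c²`. -/
theorem single_qubit_QFT_entry_perturbation (c μ μt ε : ℝ) (hc : 0 < c) (hc1 : c ≤ 1)
    (hμ : |μ| ≤ 1 - c) (hμt : |μt| ≤ 1 - c) (hε₀ : 0 ≤ ε) (hε : |μ - μt| ≤ ε)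
    (x : ℝ) (hx : x = 1 ∨ x = -1) (a : Bool) :
    |Real.sqrt ((1 + μ * x) / 2) * (if a then (x - μ) / Real.sqrt (1 - μ ^ 2) else 1) -
        Real.sqrt ((1 + μt * x) / 2) *
          (if a then (x - μt) / Real.sqrt (1 - μt ^ 2) else 1)| ≤
      ((2 - c) * (1 / Real.sqrt (8 * c) + 1 / (2 * c)) + 1) / c ^ 2 * ε := by
  have hx1 : |x| = 1 := by rcases hx with rfl | rfl <;> simp
  have hxneg : |-x| = 1 := by rwa [abs_neg]
  have hx2 : x ^ 2 = 1 := by rw [← sq_abs, hx1, one_pow]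
  have hfold : ∀ {ν : ℝ}, |ν| ≤ 1 - c →
      √((1 + ν * x) / 2) * ((x - ν) / √(1 - ν ^ 2)) = x * √((1 + ν * -x) / 2) := by
    intro ν hν
    rw [mul_neg, ← sub_eq_add_neg]
    exact sqrt_mul_div_sqrt_one_sub_sq hx2
      (hc.trans_le (le_one_add_mul_of_abs_le hν hx1))
      (by linarith [le_one_add_mul_of_abs_le hν hxneg, mul_neg ν x])
  calc _ ≤ ε / √(8 * c) := by
        cases a
        · simpa using abs_sqrt_entry_sub_le hc hμ hμt hε hx1
        · rw [if_pos rfl, if_pos rfl, hfold hμ, hfold hμt, ← mul_sub, abs_mul, hx1, one_mul]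
          exact abs_sqrt_entry_sub_le hc hμ hμt hε hxneg
    _ = 1 / √(8 * c) * ε := by ring
    _ ≤ _ := mul_le_mul_of_nonneg_right (inv_sqrt_le_perturbation_constant hc hc1) hε₀
end
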